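/- Let Ω ⊂ ℝⁿ be bounded open with C^{1,γ} boundary and E ⊆ ℝⁿ a bounded measurable set with Per_{s₀}(E;Ω) < ∞ for some s₀ ∈ (0,1). Then lim_{s→0⁺} s·Per_s(E;Ω) = H^{n-1}(S^{n-1})·|E∩Ω|. -/

import Mathlib

open MeasureTheory Filter Metric Set

noncomputable def interL (n : ℕ) (s : ℝ) (A B : Set (EuclideanSpace ℝ (Fin n))) : ENNReal :=
  ∫⁻ x in A, ∫⁻ y in B, ENNReal.ofReal (‖x - y‖ ^ (-((n : ℝ) + s)))

noncomputable def fracPer (n : ℕ) (s : ℝ) (E Ω : Set (EuclideanSpace ℝ (Fin n))) : ENNReal :=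
  interL n s (E ∩ Ω) (Eᶜ ∩ Ω) + interL n s (E ∩ Ω) (Eᶜ ∩ Ωᶜ) + interL n s (E ∩ Ωᶜ) (Eᶜ ∩ Ω)

/-- The (n-1)-dimensional measure of the unit sphere `S^{n-1}`, i.e. `n·ω_n`. -/
noncomputable def sphereArea (n : ℕ) : ℝ :=
  (n : ℝ) * (volume (ball (0 : EuclideanSpace ℝ (Fin n)) 1)).toReal

/-- `Ω` is a domain with `C^{1,γ}` boundary: near each boundary point, `Ω` is the
sublevel set of a `C^1` function with nonvanishing, γ-Hölder continuous differential. -/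
def IsC1HolderDomain (n : ℕ) (Ω : Set (EuclideanSpace ℝ (Fin n))) : Prop :=
  ∃ γ : NNReal, 0 < γ ∧ γ ≤ 1 ∧
    ∀ p ∈ frontier Ω, ∃ (U : Set (EuclideanSpace ℝ (Fin n)))
      (f : EuclideanSpace ℝ (Fin n) → ℝ) (C : NNReal),
      IsOpen U ∧ p ∈ U ∧ ContDiff ℝ 1 f ∧ HolderOnWith C γ (fderiv ℝ f) U ∧
      (∀ x ∈ U, fderiv ℝ f x ≠ 0) ∧ Ω ∩ U = {x ∈ U | f x < 0}


/-!
Split `Per_t(E;Ω) = L_t(E∩Ω, Eᶜ) + L_t(E∩Ωᶜ, Eᶜ∩Ω)` and the kernel `|x-y|^{-(n+t)}` at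
`|x-y| = 1`. For `t ≤ s₀` the near part of the kernel is at most the `s₀`-kernel and the far part
is at most `1`, so everything except the far part of `L_t(E∩Ω, Eᶜ)` stays bounded by
`Per_{s₀}(E;Ω) + |E∩Ωᶜ| |Eᶜ∩Ω|`. In polar coordinates the far part of `L_t(E∩Ω, Eᶜ)` is at most
`|E∩Ω| ∫_{|z|≥1} |z|^{-(n+t)} dz = |E∩Ω| H^{n-1}(S^{n-1}) / t`, and at least
`|E∩Ω| H^{n-1}(S^{n-1}) R^{-t} / t` as soon as `Eᶜ` contains every `(B_R(x))ᶜ` with `x ∈ E`.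
Multiplying by `t` and letting `t → 0⁺` squeezes `t · Per_t(E;Ω)` to `H^{n-1}(S^{n-1}) |E∩Ω|`.
-/

open scoped ENNReal

theorem lintegral_Ici_rpow_neg_one_sub {R t : ℝ} (hR : 0 < R) (ht : 0 < t) :
    ∫⁻ r in Ici R, ENNReal.ofReal (r ^ (-1 - t)) = ENNReal.ofReal (R ^ (-t) / t) := by
  rw [← Measure.restrict_congr_set Ioi_ae_eq_Ici,
    ← ofReal_integral_eq_lintegral_ofReal (integrableOn_Ioi_rpow_of_lt (by linarith) hR)
      (ae_restrict_of_forall_mem measurableSet_Ioi fun r hr =>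
        Real.rpow_nonneg (hR.trans hr).le _),
    integral_Ioi_rpow_of_lt (by linarith) hR]
  congr 1
  rw [show -1 - t + 1 = -t by ring, neg_div, div_neg, neg_neg]

section Polar

variable {V : Type*} [NormedAddCommGroup V] [NormedSpace ℝ V] [MeasurableSpace V] [BorelSpace V]
  [FiniteDimensional ℝ V] (μ : Measure V) [μ.IsAddHaarMeasure]

theorem lintegral_fun_norm_addHaar [Nontrivial V] (g : ℝ → ℝ≥0∞) (hg : Measurable g) :
    ∫⁻ x, g ‖x‖ ∂μ = μ.toSphere univ *
      ∫⁻ r in Ioi (0 : ℝ), ENNReal.ofReal (r ^ (Module.finrank ℝ V - 1)) * g r := by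
  calc ∫⁻ x, g ‖x‖ ∂μ = ∫⁻ x : ({0}ᶜ : Set V), g ‖(x : V)‖ ∂(μ.comap (↑)) := by
        rw [lintegral_subtype_comap (measurableSet_singleton 0).compl fun x : V => g ‖x‖,
          restrict_compl_singleton]
    _ = ∫⁻ p : sphere (0 : V) 1 × Ioi (0 : ℝ), g p.2
          ∂(μ.toSphere.prod (.volumeIoiPow (Module.finrank ℝ V - 1))) := by
        simpa using μ.measurePreserving_homeomorphUnitSphereProd.lintegral_comp_emb
          (Homeomorph.measurableEmbedding _) (fun p => g p.2)
    _ = μ.toSphere univ * ∫⁻ r : Ioi (0 : ℝ), g r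
          ∂(Measure.volumeIoiPow (Module.finrank ℝ V - 1)) := by
        rw [lintegral_prod (fun p : sphere (0 : V) 1 × Ioi (0 : ℝ) => g p.2)
          ((hg.comp measurable_subtype_coe).comp measurable_snd).aemeasurable]
        dsimp only
        rw [lintegral_const, mul_comm]
    _ = _ := by
        rw [Measure.volumeIoiPow, lintegral_withDensity_eq_lintegral_mul _
          (f := fun r : Ioi (0 : ℝ) => ENNReal.ofReal (r.1 ^ (Module.finrank ℝ V - 1)))
          (by fun_prop) (show Measurable fun r : Ioi (0 : ℝ) => g r from
            hg.comp measurable_subtype_coe)]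
        simpa [Pi.mul_apply] using congrArg (μ.toSphere univ * ·) (lintegral_subtype_comap
          measurableSet_Ioi fun r : ℝ => ENNReal.ofReal (r ^ (Module.finrank ℝ V - 1)) * g r)

theorem lintegral_compl_ball_rpow_norm_sub (x : V) {R t : ℝ} (hR : 0 < R) (ht : 0 < t) :
    ∫⁻ y in (ball x R)ᶜ, ENNReal.ofReal (‖x - y‖ ^ (-((Module.finrank ℝ V : ℝ) + t))) ∂μ =
      μ.toSphere univ * ENNReal.ofReal (R ^ (-t) / t) := by
  rcases subsingleton_or_nontrivial V with hV | hV
  · have : (ball x R)ᶜ = ∅ := by simp [Subsingleton.eq_univ_of_nonempty (nonempty_ball.2 hR)]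
    simp [this, μ.toSphere_eq_zero_iff.2 hV]
  set d := Module.finrank ℝ V
  set g : ℝ → ℝ≥0∞ := (Ici R).indicator fun r => ENNReal.ofReal (r ^ (-((d : ℝ) + t)))
  have hd : 1 ≤ d := Module.finrank_pos
  have radial : ∀ r ∈ Ioi (0 : ℝ), ENNReal.ofReal (r ^ (d - 1)) * g r =
      (Ici R).indicator (fun r => ENNReal.ofReal (r ^ (-1 - t))) r := by
    intro r (hr : 0 < r)
    by_cases hrR : r ∈ Ici R
    · simp only [g, indicator_of_mem hrR]
      rw [← ENNReal.ofReal_mul (by positivity), ← Real.rpow_natCast, ← Real.rpow_add hr,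
        Nat.cast_sub hd]
      ring_nf
    · simp [g, indicator_of_notMem hrR]
  calc ∫⁻ y in (ball x R)ᶜ, ENNReal.ofReal (‖x - y‖ ^ (-((d : ℝ) + t))) ∂μ
      = ∫⁻ y, g ‖y - x‖ ∂μ := by
        rw [← lintegral_indicator measurableSet_ball.compl]
        refine lintegral_congr fun y => ?_
        by_cases h : R ≤ ‖y - x‖ <;>
          simp [g, dist_eq_norm, norm_sub_rev x y, h]
    _ = μ.toSphere univ * ∫⁻ r in Ioi (0 : ℝ), ENNReal.ofReal (r ^ (d - 1)) * g r := by
        rw [lintegral_sub_right_eq_self (fun y => g ‖y‖),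
          lintegral_fun_norm_addHaar μ g (Measurable.indicator (by fun_prop) measurableSet_Ici)]
    _ = μ.toSphere univ * ENNReal.ofReal (R ^ (-t) / t) := by
        rw [setLIntegral_congr_fun measurableSet_Ioi radial, lintegral_indicator measurableSet_Ici,
          Measure.restrict_restrict measurableSet_Ici,
          inter_eq_left.2 fun r (hr : r ∈ Ici R) => mem_Ioi.2 (hR.trans_le hr),
          lintegral_Ici_rpow_neg_one_sub hR ht]

end Polar

theorem sphereArea_nonneg (n : ℕ) : 0 ≤ sphereArea n := by
  unfold sphereArea; positivity

theorem toSphere_volume_univ (n : ℕ) :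
    (volume : Measure (EuclideanSpace ℝ (Fin n))).toSphere univ =
      ENNReal.ofReal (sphereArea n) := by
  rw [Measure.toSphere_apply_univ, finrank_euclideanSpace_fin, sphereArea,
    ENNReal.ofReal_mul (Nat.cast_nonneg n), ENNReal.ofReal_natCast,
    ENNReal.ofReal_toReal measure_ball_lt_top.ne]

noncomputable def fracKernel (n : ℕ) (t : ℝ) (x y : EuclideanSpace ℝ (Fin n)) : ℝ≥0∞ :=
  ENNReal.ofReal (‖x - y‖ ^ (-((n : ℝ) + t)))

section FracKernel

variable {n : ℕ} {s t : ℝ}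

theorem interL_eq_lintegral_fracKernel (A B : Set (EuclideanSpace ℝ (Fin n))) :
    interL n t A B = ∫⁻ x in A, ∫⁻ y in B, fracKernel n t x y :=
  rfl

theorem measurable_lintegral_fracKernel (B : Set (EuclideanSpace ℝ (Fin n))) :
    Measurable fun x => ∫⁻ y in B, fracKernel n t x y :=
  Measurable.lintegral_prod_right' (f := fun p => fracKernel n t p.1 p.2)
    (by unfold fracKernel; fun_prop)

theorem lintegral_compl_ball_fracKernel (x : EuclideanSpace ℝ (Fin n)) {R : ℝ} (hR : 0 < R)
    (ht : 0 < t) :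
    ∫⁻ y in (ball x R)ᶜ, fracKernel n t x y =
      ENNReal.ofReal (sphereArea n * (R ^ (-t) / t)) := by
  have h := lintegral_compl_ball_rpow_norm_sub volume x hR ht
  rwa [finrank_euclideanSpace_fin, toSphere_volume_univ,
    ← ENNReal.ofReal_mul (sphereArea_nonneg n)] at h

theorem fracKernel_le_of_norm_sub_lt_one (ht : 0 < t) (hts : t ≤ s)
    {x y : EuclideanSpace ℝ (Fin n)} (hxy : ‖x - y‖ < 1) :
    fracKernel n t x y ≤ fracKernel n s x y := by
  have hs : 0 < s := ht.trans_le hts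
  unfold fracKernel
  rcases (norm_nonneg (x - y)).eq_or_lt with h0 | h0
  · rw [← h0, Real.zero_rpow (neg_ne_zero.2 (by positivity)),
      Real.zero_rpow (neg_ne_zero.2 (by positivity))]
  · exact ENNReal.ofReal_le_ofReal (Real.rpow_le_rpow_of_exponent_ge h0 hxy.le (by linarith))

theorem fracKernel_le_one (ht : 0 ≤ t) {x y : EuclideanSpace ℝ (Fin n)} (hxy : 1 ≤ ‖x - y‖) :
    fracKernel n t x y ≤ 1 :=
  ENNReal.ofReal_le_one.2 <|
    Real.rpow_le_one_of_one_le_of_nonpos hxy (by linarith [n.cast_nonneg (α := ℝ)])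

theorem lintegral_fracKernel_le_add (ht : 0 < t) (hts : t ≤ s) (x : EuclideanSpace ℝ (Fin n))
    (B : Set (EuclideanSpace ℝ (Fin n))) :
    ∫⁻ y in B, fracKernel n t x y ≤
      (∫⁻ y in B, fracKernel n s x y) + ∫⁻ y in B \ ball x 1, fracKernel n t x y := by
  rw [← lintegral_inter_add_sdiff _ B measurableSet_ball]
  gcongr ?_ + _
  calc ∫⁻ y in B ∩ ball x 1, fracKernel n t x y ≤ ∫⁻ y in B ∩ ball x 1, fracKernel n s x y :=
        setLIntegral_mono (by unfold fracKernel; fun_prop) fun y hy =>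
          fracKernel_le_of_norm_sub_lt_one ht hts (by simpa [dist_eq_norm, norm_sub_rev] using hy.2)
    _ ≤ ∫⁻ y in B, fracKernel n s x y := lintegral_mono_set inter_subset_left

theorem interL_le_add_of_forall {A B : Set (EuclideanSpace ℝ (Fin n))} {b : ℝ≥0∞}
    (h : ∀ x, ∫⁻ y in B, fracKernel n t x y ≤ (∫⁻ y in B, fracKernel n s x y) + b) :
    interL n t A B ≤ interL n s A B + volume A * b :=
  calc interL n t A B ≤ ∫⁻ x in A, ((∫⁻ y in B, fracKernel n s x y) + b) := lintegral_mono h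
    _ = interL n s A B + volume A * b := by
        rw [lintegral_add_right _ measurable_const, setLIntegral_const, mul_comm]; rfl

theorem interL_le_add_volume_mul_div (ht : 0 < t) (hts : t ≤ s)
    (A B : Set (EuclideanSpace ℝ (Fin n))) :
    interL n t A B ≤ interL n s A B + volume A * ENNReal.ofReal (sphereArea n / t) := by
  refine interL_le_add_of_forall fun x => (lintegral_fracKernel_le_add ht hts x B).trans ?_
  gcongr
  calc ∫⁻ y in B \ ball x 1, fracKernel n t x y ≤ ∫⁻ y in (ball x 1)ᶜ, fracKernel n t x y :=
        lintegral_mono_set fun y hy => hy.2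
    _ = ENNReal.ofReal (sphereArea n / t) := by
        rw [lintegral_compl_ball_fracKernel x one_pos ht, Real.one_rpow, mul_one_div]

theorem interL_le_add_volume_mul_volume (ht : 0 < t) (hts : t ≤ s)
    (A B : Set (EuclideanSpace ℝ (Fin n))) :
    interL n t A B ≤ interL n s A B + volume A * volume B := by
  refine interL_le_add_of_forall fun x => (lintegral_fracKernel_le_add ht hts x B).trans ?_
  gcongr
  calc ∫⁻ y in B \ ball x 1, fracKernel n t x y ≤ ∫⁻ _ in B \ ball x 1, 1 :=
        setLIntegral_mono measurable_const fun y hy => fracKernel_le_one ht.le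
          (by simpa [dist_eq_norm, norm_sub_rev] using hy.2)
    _ ≤ volume B := by rw [setLIntegral_one]; exact measure_mono sdiff_subset

theorem volume_mul_le_interL {A B : Set (EuclideanSpace ℝ (Fin n))} {R : ℝ} (hR : 0 < R)
    (ht : 0 < t) (hAB : ∀ x ∈ A, Bᶜ ⊆ ball x R) :
    volume A * ENNReal.ofReal (sphereArea n * (R ^ (-t) / t)) ≤ interL n t A B := by
  rw [mul_comm, ← setLIntegral_const]
  refine setLIntegral_mono (measurable_lintegral_fracKernel B) fun x hx => ?_
  rw [← lintegral_compl_ball_fracKernel x hR ht]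
  exact lintegral_mono_set (compl_subset_comm.1 (hAB x hx))

theorem interL_union_right {A B₁ B₂ : Set (EuclideanSpace ℝ (Fin n))} (hB₂ : MeasurableSet B₂)
    (hB : Disjoint B₁ B₂) :
    interL n t A (B₁ ∪ B₂) = interL n t A B₁ + interL n t A B₂ := by
  simp only [interL_eq_lintegral_fracKernel]
  rw [← lintegral_add_left (measurable_lintegral_fracKernel B₁)]
  exact lintegral_congr fun x => lintegral_union hB₂ hB

end FracKernel

section FracPer

variable {n : ℕ} {E Ω : Set (EuclideanSpace ℝ (Fin n))} {s t : ℝ}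

theorem fracPer_eq (hE : MeasurableSet E) (hΩ : MeasurableSet Ω) (t : ℝ) :
    fracPer n t E Ω = interL n t (E ∩ Ω) Eᶜ + interL n t (E ∩ Ωᶜ) (Eᶜ ∩ Ω) := by
  rw [fracPer, ← interL_union_right (hE.compl.inter hΩ.compl)
    (disjoint_compl_right.mono inter_subset_right inter_subset_right),
    ← inter_union_distrib_left, union_compl_self, inter_univ]

theorem fracPer_le (hE : MeasurableSet E) (hΩ : MeasurableSet Ω) (ht : 0 < t) (hts : t ≤ s) :
    fracPer n t E Ω ≤ fracPer n s E Ω + volume (E ∩ Ωᶜ) * volume (Eᶜ ∩ Ω) +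
      volume (E ∩ Ω) * ENNReal.ofReal (sphereArea n / t) := by
  rw [fracPer_eq hE hΩ, fracPer_eq hE hΩ]
  calc _ ≤ interL n s (E ∩ Ω) Eᶜ + volume (E ∩ Ω) * ENNReal.ofReal (sphereArea n / t) +
        (interL n s (E ∩ Ωᶜ) (Eᶜ ∩ Ω) + volume (E ∩ Ωᶜ) * volume (Eᶜ ∩ Ω)) :=
        add_le_add (interL_le_add_volume_mul_div ht hts _ _)
          (interL_le_add_volume_mul_volume ht hts _ _)
    _ = _ := by ring

theorem le_fracPer (hE : MeasurableSet E) (hΩ : MeasurableSet Ω) {R : ℝ} (hR : 0 < R)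
    (hER : ∀ x ∈ E, E ⊆ ball x R) (ht : 0 < t) :
    volume (E ∩ Ω) * ENNReal.ofReal (sphereArea n * (R ^ (-t) / t)) ≤ fracPer n t E Ω := by
  rw [fracPer_eq hE hΩ]
  exact (volume_mul_le_interL hR ht fun x hx => by rw [compl_compl]; exact hER x hx.1).trans
    le_self_add

theorem mul_toReal_fracPer_le (hE : MeasurableSet E) (hΩ : MeasurableSet Ω)
    (hEΩ : volume (E ∩ Ω) ≠ ⊤) (hs : fracPer n s E Ω + volume (E ∩ Ωᶜ) * volume (Eᶜ ∩ Ω) ≠ ⊤)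
    (ht : 0 < t) (hts : t ≤ s) :
    t * (fracPer n t E Ω).toReal ≤
      t * (fracPer n s E Ω + volume (E ∩ Ωᶜ) * volume (Eᶜ ∩ Ω)).toReal +
        sphereArea n * (volume (E ∩ Ω)).toReal := by
  have h := ENNReal.toReal_mono (by finiteness) (fracPer_le hE hΩ ht hts)
  rw [ENNReal.toReal_add hs (by finiteness), ENNReal.toReal_mul,
    ENNReal.toReal_ofReal (div_nonneg (sphereArea_nonneg n) ht.le)] at h
  calc t * (fracPer n t E Ω).toReal
      ≤ t * ((fracPer n s E Ω + volume (E ∩ Ωᶜ) * volume (Eᶜ ∩ Ω)).toReal +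
        (volume (E ∩ Ω)).toReal * (sphereArea n / t)) := by gcongr
    _ = _ := by field_simp

theorem le_mul_toReal_fracPer (hE : MeasurableSet E) (hΩ : MeasurableSet Ω) {R : ℝ} (hR : 0 < R)
    (hER : ∀ x ∈ E, E ⊆ ball x R) (ht : 0 < t) (hfin : fracPer n t E Ω ≠ ⊤) :
    sphereArea n * R ^ (-t) * (volume (E ∩ Ω)).toReal ≤ t * (fracPer n t E Ω).toReal := by
  have h := ENNReal.toReal_mono hfin (le_fracPer hE hΩ hR hER ht)
  rw [ENNReal.toReal_mul, ENNReal.toReal_ofReal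
    (mul_nonneg (sphereArea_nonneg n) (by positivity))] at h
  calc sphereArea n * R ^ (-t) * (volume (E ∩ Ω)).toReal
      = t * ((volume (E ∩ Ω)).toReal * (sphereArea n * (R ^ (-t) / t))) := by field_simp
    _ ≤ t * (fracPer n t E Ω).toReal := by gcongr

end FracPer

theorem stmt_12_general {n : ℕ} (Ω E : Set (EuclideanSpace ℝ (Fin n)))
    (hΩo : IsOpen Ω) (hΩb : Bornology.IsBounded Ω)
    (hE : MeasurableSet E) (hEb : Bornology.IsBounded E)
    (s₀ : ℝ) (hs₀ : s₀ ∈ Set.Ioo (0 : ℝ) 1) (hfin : fracPer n s₀ E Ω ≠ ⊤) :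
    Tendsto (fun s : ℝ => s * (fracPer n s E Ω).toReal)
      (nhdsWithin 0 (Set.Ioi 0)) (nhds (sphereArea n * (volume (E ∩ Ω)).toReal)) := by
  have hΩ := hΩo.measurableSet
  have hEΩ : volume (E ∩ Ω) ≠ ⊤ := (hEb.subset inter_subset_left).measure_lt_top.ne
  have hEΩc : volume (E ∩ Ωᶜ) ≠ ⊤ := (hEb.subset inter_subset_left).measure_lt_top.ne
  have hEcΩ : volume (Eᶜ ∩ Ω) ≠ ⊤ := (hΩb.subset inter_subset_right).measure_lt_top.ne
  set M := fracPer n s₀ E Ω + volume (E ∩ Ωᶜ) * volume (Eᶜ ∩ Ω)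
  set m := (volume (E ∩ Ω)).toReal
  set R := diam E + 1
  have hR : 0 < R := by positivity
  have hER : ∀ x ∈ E, E ⊆ ball x R := fun x hx y hy =>
    (dist_le_diam_of_mem hEb hy hx).trans_lt (lt_add_one _)
  have hM : M ≠ ⊤ := by finiteness
  have hfin_t : ∀ t ∈ Ioc 0 s₀, fracPer n t E Ω ≠ ⊤ := fun t ht =>
    ne_top_of_le_ne_top (by finiteness) (fracPer_le hE hΩ ht.1 ht.2)
  refine tendsto_of_tendsto_of_tendsto_of_le_of_le' (g := fun t => sphereArea n * R ^ (-t) * m)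
    (h := fun t => t * M.toReal + sphereArea n * m) ?_ ?_ ?_ ?_
  · have : Continuous fun t : ℝ => sphereArea n * R ^ (-t) * m := by fun_prop (disch := positivity)
    exact (this.tendsto' 0 _ (by simp)).mono_left nhdsWithin_le_nhds
  · exact ((continuous_id.mul continuous_const).add continuous_const).tendsto' 0 _ (by simp)
      |>.mono_left nhdsWithin_le_nhds
  · filter_upwards [Ioc_mem_nhdsGT hs₀.1] with t ht
    exact le_mul_toReal_fracPer hE hΩ hR hER ht.1 (hfin_t t ht)
  · filter_upwards [Ioc_mem_nhdsGT hs₀.1] with t ht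
    exact mul_toReal_fracPer_le hE hΩ hEΩ hM ht.1 ht.2

theorem stmt_12 {n : ℕ} (Ω E : Set (EuclideanSpace ℝ (Fin n)))
    (hΩo : IsOpen Ω) (hΩb : Bornology.IsBounded Ω) (hΩreg : IsC1HolderDomain n Ω)
    (hE : MeasurableSet E) (hEb : Bornology.IsBounded E)
    (s₀ : ℝ) (hs₀ : s₀ ∈ Set.Ioo (0 : ℝ) 1) (hfin : fracPer n s₀ E Ω ≠ ⊤) :
    Tendsto (fun s : ℝ => s * (fracPer n s E Ω).toReal)
      (nhdsWithin 0 (Set.Ioi 0)) (nhds (sphereArea n * (volume (E ∩ Ω)).toReal)) :=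
  stmt_12_general Ω E hΩo hΩb hE hEb s₀ hs₀ hfin
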